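/- arXiv:1801.06720 — 4 statements merged into one kernel-verified Lean document; each statement's English description precedes it below -/
import Mathlib

section
/- Let κ ≥ 1, τ ≥ 1 and λ ∈ (0,κ²], and let G_λ : (0,κ²] → [0,∞) satisfy property (P2) with constant F > 0 and qualification τ. Let φ : (0,κ²] → (0,∞) be nondecreasing, let ζ ∈ [0,τ] be such that u ↦ φ(u)·u^{−ζ} is nondecreasing on (0,κ²], and let c > 0 be such that c·λ^τ/φ(λ) ≤ u^τ/φ(u) for all u ∈ [λ,κ²]. Then for every a ∈ [0,ζ] and every u ∈ (0,κ²], |1 − G_λ(u)·u|·φ(u)·u^{−a} ≤ (F/min(c,1))·φ(λ)·λ^{−a}. -/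
/-- Lemma 1 of the paper (bound on the residual times the index function).
`G` is the filter function `G_λ` satisfying property (P2) with constant `F` and
qualification `τ`; `φ` is a nondecreasing index function such that `u ↦ φ(u)·u^{-ζ}`
is nondecreasing, and the qualification covers `φ` with constant `c`. -/
theorem stmt_0 (κ τ lam F c ζ : ℝ) (G φ : ℝ → ℝ)
    (hκ : 1 ≤ κ) (hτ : 1 ≤ τ) (hlam : lam ∈ Set.Ioc (0 : ℝ) (κ ^ 2))
    (hF : 0 < F)
    (hGnonneg : ∀ u ∈ Set.Ioc (0 : ℝ) (κ ^ 2), 0 ≤ G u)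
    (hP2 : ∀ α ∈ Set.Icc (0 : ℝ) τ, ∀ u ∈ Set.Ioc (0 : ℝ) (κ ^ 2),
      |1 - G u * u| * u ^ α * lam ^ (-α) ≤ F)
    (hφpos : ∀ u ∈ Set.Ioc (0 : ℝ) (κ ^ 2), 0 < φ u)
    (hφmono : ∀ u ∈ Set.Ioc (0 : ℝ) (κ ^ 2), ∀ v ∈ Set.Ioc (0 : ℝ) (κ ^ 2),
      u ≤ v → φ u ≤ φ v)
    (hζ : ζ ∈ Set.Icc (0 : ℝ) τ)
    (hφζ : ∀ u ∈ Set.Ioc (0 : ℝ) (κ ^ 2), ∀ v ∈ Set.Ioc (0 : ℝ) (κ ^ 2),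
      u ≤ v → φ u * u ^ (-ζ) ≤ φ v * v ^ (-ζ))
    (hc : 0 < c)
    (hq : ∀ u ∈ Set.Icc lam (κ ^ 2), c * lam ^ τ / φ lam ≤ u ^ τ / φ u) :
    ∀ a ∈ Set.Icc (0 : ℝ) ζ, ∀ u ∈ Set.Ioc (0 : ℝ) (κ ^ 2),
      |1 - G u * u| * φ u * u ^ (-a) ≤ (F / min c 1) * φ lam * lam ^ (-a) := by
  intro a ha u hu
  have hu0 : 0 < u := hu.1
  have hl0 : 0 < lam := hlam.1
  have hφu : 0 < φ u := hφpos u hu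
  have hφl : 0 < φ lam := hφpos lam hlam
  have hm : 0 < min c 1 := lt_min hc one_pos
  have hm1 : min c 1 ≤ 1 := min_le_right _ _
  have hmc : min c 1 ≤ c := min_le_left _ _
  have hLa : (0:ℝ) < lam ^ (-a) := Real.rpow_pos_of_pos hl0 _
  have hUa : (0:ℝ) < u ^ (-a) := Real.rpow_pos_of_pos hu0 _
  set r := |1 - G u * u| with hr
  have hr0 : 0 ≤ r := abs_nonneg _
  rcases le_or_gt u lam with hul | hul
  · -- case u ≤ lam
    have hP0 := hP2 0 ⟨le_refl 0, by linarith⟩ u hu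
    simp only [Real.rpow_zero, neg_zero, mul_one] at hP0
    have hz := hφζ u hu lam hlam hul
    have hexp : u ^ (-a) = u ^ (-ζ) * u ^ (ζ - a) := by
      rw [← Real.rpow_add hu0]; congr 1; ring
    have hexpl : lam ^ (-a) = lam ^ (-ζ) * lam ^ (ζ - a) := by
      rw [← Real.rpow_add hl0]; congr 1; ring
    have hpow : u ^ (ζ - a) ≤ lam ^ (ζ - a) :=
      Real.rpow_le_rpow hu0.le hul (by linarith [ha.2])
    have hphi : φ u * u ^ (-a) ≤ φ lam * lam ^ (-a) := by
      rw [hexp, hexpl, ← mul_assoc, ← mul_assoc]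
      exact mul_le_mul hz hpow (Real.rpow_pos_of_pos hu0 _).le
        (by positivity)
    have h1 : r * φ u * u ^ (-a) ≤ F * (φ lam * lam ^ (-a)) := by
      rw [mul_assoc]
      exact mul_le_mul hP0 hphi (by positivity) hF.le
    have h2 : F ≤ F / min c 1 := by
      rw [le_div_iff₀ hm]; nlinarith
    calc r * φ u * u ^ (-a) ≤ F * (φ lam * lam ^ (-a)) := h1
      _ ≤ (F / min c 1) * (φ lam * lam ^ (-a)) := by
          exact mul_le_mul_of_nonneg_right h2 (by positivity)
      _ = (F / min c 1) * φ lam * lam ^ (-a) := by ring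
  · -- case lam < u
    have hA : (0:ℝ) < u ^ τ := Real.rpow_pos_of_pos hu0 _
    have hB : (0:ℝ) < lam ^ τ := Real.rpow_pos_of_pos hl0 _
    have hPτ := hP2 τ ⟨by linarith, le_refl τ⟩ u hu
    have hBinv : lam ^ (-τ) = (lam ^ τ)⁻¹ := Real.rpow_neg hl0.le τ
    rw [hBinv] at hPτ
    have hrA : r * u ^ τ ≤ F * lam ^ τ := by
      have := mul_le_mul_of_nonneg_right hPτ hB.le
      rwa [mul_assoc, inv_mul_cancel₀ hB.ne', mul_one] at this
    have hq' := hq u ⟨hul.le, hu.2⟩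
    have hq2 : c * lam ^ τ * φ u ≤ u ^ τ * φ lam :=
      (div_le_div_iff₀ hφl hφu).mp hq'
    have hUaLa : u ^ (-a) ≤ lam ^ (-a) := by
      rw [Real.rpow_neg hu0.le, Real.rpow_neg hl0.le]
      exact inv_anti₀ (Real.rpow_pos_of_pos hl0 _)
        (Real.rpow_le_rpow hl0.le hul.le ha.1)
    -- first: c * r * φ u ≤ F * φ lam
    have hkey : c * r * φ u ≤ F * φ lam := by
      have h3 : (r * u ^ τ) * (c * lam ^ τ * φ u) ≤ (F * lam ^ τ) * (u ^ τ * φ lam) :=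
        mul_le_mul hrA hq2 (by positivity) (by positivity)
      have hAB : (0:ℝ) < u ^ τ * lam ^ τ := by positivity
      nlinarith [hAB, h3]
    have h4 : r * φ u ≤ (F / c) * φ lam := by
      rw [div_mul_eq_mul_div, le_div_iff₀ hc]; nlinarith
    have h5 : F / c ≤ F / min c 1 :=
      div_le_div_of_nonneg_left hF.le hm hmc
    calc r * φ u * u ^ (-a) ≤ ((F / c) * φ lam) * lam ^ (-a) :=
          mul_le_mul h4 hUaLa hUa.le (by positivity)
      _ ≤ (F / min c 1) * φ lam * lam ^ (-a) := by
          apply mul_le_mul_of_nonneg_right _ hLa.le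
          exact mul_le_mul_of_nonneg_right h5 hφl.le
end

section
/- Let κ ≥ 1 and λ > 0, and let G_λ : (0,κ²] → [0,∞) satisfy property (P1) with constant E > 0. Let ζ ≥ 0 and let φ : (0,κ²] → (0,∞) be nondecreasing such that u ↦ φ(u)·u^{−ζ} is nondecreasing on (0,κ²]. Then for every u ∈ (0,κ²], G_λ(u)·u^{1/2}·φ(u) ≤ E·φ(κ²)·κ^{−min(2ζ,1)}·λ^{−max(1/2−ζ,0)}. -/
/-- bound on `G_λ(u)·u^{1/2}·φ(u)` for a filter function `G` satisfying
property (P1) with constant `E` and a nondecreasing index function `φ` such that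
`u ↦ φ(u)·u^{-ζ}` is nondecreasing. -/
theorem stmt_1 (κ lam E ζ : ℝ) (G φ : ℝ → ℝ)
    (hκ : 1 ≤ κ) (hlam : 0 < lam) (hE : 0 < E)
    (hGnonneg : ∀ u ∈ Set.Ioc (0 : ℝ) (κ ^ 2), 0 ≤ G u)
    (hP1 : ∀ α ∈ Set.Icc (0 : ℝ) 1, ∀ u ∈ Set.Ioc (0 : ℝ) (κ ^ 2),
      u ^ α * G u * lam ^ (1 - α) ≤ E)
    (hζ : 0 ≤ ζ)
    (hφpos : ∀ u ∈ Set.Ioc (0 : ℝ) (κ ^ 2), 0 < φ u)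
    (hφmono : ∀ u ∈ Set.Ioc (0 : ℝ) (κ ^ 2), ∀ v ∈ Set.Ioc (0 : ℝ) (κ ^ 2),
      u ≤ v → φ u ≤ φ v)
    (hφζ : ∀ u ∈ Set.Ioc (0 : ℝ) (κ ^ 2), ∀ v ∈ Set.Ioc (0 : ℝ) (κ ^ 2),
      u ≤ v → φ u * u ^ (-ζ) ≤ φ v * v ^ (-ζ)) :
    ∀ u ∈ Set.Ioc (0 : ℝ) (κ ^ 2),
      G u * u ^ ((1 : ℝ) / 2) * φ u
        ≤ E * φ (κ ^ 2) * κ ^ (-min (2 * ζ) 1) * lam ^ (-max (1 / 2 - ζ) 0) := by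
  intro u hu
  obtain ⟨hu0, huκ⟩ := hu
  have hκ0 : (0 : ℝ) < κ := lt_of_lt_of_le one_pos hκ
  have hκ2 : (0 : ℝ) < κ ^ 2 := by positivity
  have hGu : 0 ≤ G u := hGnonneg u ⟨hu0, huκ⟩
  have hκζ : ((κ ^ 2 : ℝ)) ^ (-ζ) = κ ^ (-(2 * ζ)) := by
    rw [← Real.rpow_natCast κ 2, ← Real.rpow_mul hκ0.le]
    norm_num
  -- key bound: φ u ≤ φ (κ^2) * κ^(-(2ζ)) * u^ζ
  have hφb : φ u ≤ φ (κ ^ 2) * κ ^ (-(2 * ζ)) * u ^ ζ := by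
    have h1 := hφζ u ⟨hu0, huκ⟩ (κ ^ 2) ⟨hκ2, le_refl _⟩ huκ
    have huζ : u ^ (-ζ) * u ^ ζ = 1 := by
      rw [← Real.rpow_add hu0]; simp
    calc φ u = φ u * u ^ (-ζ) * u ^ ζ := by rw [mul_assoc, huζ, mul_one]
      _ ≤ φ (κ ^ 2) * (κ ^ 2 : ℝ) ^ (-ζ) * u ^ ζ :=
          mul_le_mul_of_nonneg_right h1 (Real.rpow_nonneg hu0.le ζ)
      _ = φ (κ ^ 2) * κ ^ (-(2 * ζ)) * u ^ ζ := by rw [hκζ]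
  have hφκ : 0 < φ (κ ^ 2) := hφpos (κ ^ 2) ⟨hκ2, le_refl _⟩
  have hhalf : G u * u ^ ((1 : ℝ) / 2) * φ u
      ≤ (u ^ (ζ + 1 / 2) * G u) * (φ (κ ^ 2) * κ ^ (-(2 * ζ))) := by
    have h2 : u ^ ((1 : ℝ) / 2) * u ^ ζ = u ^ (ζ + 1 / 2) := by
      rw [← Real.rpow_add hu0]; ring_nf
    calc G u * u ^ ((1 : ℝ) / 2) * φ u
        ≤ G u * u ^ ((1 : ℝ) / 2) * (φ (κ ^ 2) * κ ^ (-(2 * ζ)) * u ^ ζ) := by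
          apply mul_le_mul_of_nonneg_left hφb
          positivity
      _ = (u ^ ((1 : ℝ) / 2) * u ^ ζ * G u) * (φ (κ ^ 2) * κ ^ (-(2 * ζ))) := by ring
      _ = (u ^ (ζ + 1 / 2) * G u) * (φ (κ ^ 2) * κ ^ (-(2 * ζ))) := by rw [h2]
  rcases le_or_gt ζ (1 / 2) with hc | hc
  · -- ζ ≤ 1/2
    have hmin : min (2 * ζ) 1 = 2 * ζ := min_eq_left (by linarith)
    have hmax : max (1 / 2 - ζ) 0 = 1 / 2 - ζ := max_eq_left (by linarith)
    rw [hmin, hmax]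
    have hP := hP1 (ζ + 1 / 2) ⟨by linarith, by linarith⟩ u ⟨hu0, huκ⟩
    have hexp : (1 : ℝ) - (ζ + 1 / 2) = 1 / 2 - ζ := by ring
    rw [hexp] at hP
    have hlam' : 0 < lam ^ ((1 : ℝ) / 2 - ζ) := Real.rpow_pos_of_pos hlam _
    have hG : u ^ (ζ + 1 / 2) * G u ≤ E * lam ^ (-(1 / 2 - ζ)) := by
      rw [Real.rpow_neg hlam.le, ← div_eq_mul_inv, le_div_iff₀ hlam']
      exact hP
    calc G u * u ^ ((1 : ℝ) / 2) * φ u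
        ≤ (u ^ (ζ + 1 / 2) * G u) * (φ (κ ^ 2) * κ ^ (-(2 * ζ))) := hhalf
      _ ≤ (E * lam ^ (-(1 / 2 - ζ))) * (φ (κ ^ 2) * κ ^ (-(2 * ζ))) := by
          apply mul_le_mul_of_nonneg_right hG
          positivity
      _ = E * φ (κ ^ 2) * κ ^ (-(2 * ζ)) * lam ^ (-(1 / 2 - ζ)) := by ring
  · -- ζ > 1/2
    have hmin : min (2 * ζ) 1 = 1 := min_eq_right (by linarith)
    have hmax : max (1 / 2 - ζ) 0 = 0 := max_eq_right (by linarith)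
    rw [hmin, hmax]
    have hP := hP1 1 ⟨zero_le_one, le_refl _⟩ u ⟨hu0, huκ⟩
    simp only [Real.rpow_one, sub_self, Real.rpow_zero, mul_one] at hP
    -- u^(ζ+1/2) = u * u^(ζ-1/2) and u^(ζ-1/2) ≤ (κ^2)^(ζ-1/2)
    have hsplit : u ^ (ζ + 1 / 2) = u ^ (ζ - 1 / 2) * u := by
      rw [show ζ + 1 / 2 = ζ - 1 / 2 + 1 by ring, Real.rpow_add_one hu0.ne']
    have hub : u ^ (ζ - 1 / 2) ≤ κ ^ (2 * ζ - 1) := by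
      have h1 : u ^ (ζ - 1 / 2) ≤ (κ ^ 2 : ℝ) ^ (ζ - 1 / 2) :=
        Real.rpow_le_rpow hu0.le huκ (by linarith)
      have h2 : ((κ ^ 2 : ℝ)) ^ (ζ - 1 / 2) = κ ^ (2 * ζ - 1) := by
        rw [← Real.rpow_natCast κ 2, ← Real.rpow_mul hκ0.le]
        ring_nf
      linarith [h1, h2.le, h2.ge]
    have hGb : u ^ (ζ + 1 / 2) * G u ≤ E * κ ^ (2 * ζ - 1) := by
      calc u ^ (ζ + 1 / 2) * G u = u ^ (ζ - 1 / 2) * (u * G u) := by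
            rw [hsplit]; ring
        _ ≤ κ ^ (2 * ζ - 1) * E := by
            apply mul_le_mul hub (by linarith [hP]) (by positivity) (by positivity)
        _ = E * κ ^ (2 * ζ - 1) := by ring
    have hκc : κ ^ (2 * ζ - 1) * κ ^ (-(2 * ζ)) = κ ^ (-(1 : ℝ)) := by
      rw [← Real.rpow_add hκ0]; ring_nf
    calc G u * u ^ ((1 : ℝ) / 2) * φ u
        ≤ (u ^ (ζ + 1 / 2) * G u) * (φ (κ ^ 2) * κ ^ (-(2 * ζ))) := hhalf
      _ ≤ (E * κ ^ (2 * ζ - 1)) * (φ (κ ^ 2) * κ ^ (-(2 * ζ))) := by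
          apply mul_le_mul_of_nonneg_right hGb
          positivity
      _ = E * φ (κ ^ 2) * (κ ^ (2 * ζ - 1) * κ ^ (-(2 * ζ))) := by ring
      _ = E * φ (κ ^ 2) * κ ^ (-(1 : ℝ)) * lam ^ (-(0 : ℝ)) := by
          rw [hκc, neg_zero, Real.rpow_zero, mul_one]
end

section
/- (Cordes inequality) Let H be a complex Hilbert space and let A and B be positive (self-adjoint, nonnegative) bounded linear operators on H. Then for every s with 0 ≤ s ≤ 1, ‖A^s ∘ B^s‖ ≤ ‖A ∘ B‖^s, where ‖·‖ is the operator norm and A^s, B^s denote the s-th powers of A and B defined via the continuous functional calculus for positive operators. -/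
/-!
The function `t ↦ ‖a ^ t * b ^ t‖` is midpoint log-convex on `[0, 1]`: with `m = (u + v) / 2`,
the C⋆-identity and `r(xy) = r(yx)` for the spectral radius give
`‖a ^ m * b ^ m‖² = r(a ^ (u + v) * b ^ (u + v)) = r(a ^ v * b ^ v * (b ^ u * a ^ u))
  ≤ ‖a ^ v * b ^ v‖ * ‖a ^ u * b ^ u‖`.
A bounded nonnegative midpoint log-convex function `f` with `f 0 ≤ 1` and `f 1 ≤ C` satisfies
`f t ≤ C ^ t`: the supremum `M` of `f t / C ^ t` over `[0, 1]` satisfies `M ≤ √M`, because every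
point of `[0, 1]` is the midpoint of an endpoint and another point of `[0, 1]`.
-/

open Set Filter Topology
open scoped NNReal ENNReal

lemma spectralRadius_mul_comm {𝕜 A : Type*} [NormedField 𝕜] [Ring A] [Algebra 𝕜 A] (a b : A) :
    spectralRadius 𝕜 (a * b) = spectralRadius 𝕜 (b * a) := by
  suffices h : ∀ x y : A, spectralRadius 𝕜 (x * y) ≤ spectralRadius 𝕜 (y * x) from
    (h a b).antisymm (h b a)
  intro x y
  refine iSup₂_le fun k hk => ?_
  rcases eq_or_ne k 0 with rfl | hk0
  · simp
  · have hk' : k ∈ spectrum 𝕜 (y * x) \ {0} := spectrum.nonzero_mul_comm (𝕜 := 𝕜) x y ▸ ⟨hk, hk0⟩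
    exact le_iSup₂ (f := fun k (_ : k ∈ spectrum 𝕜 (y * x)) => (‖k‖₊ : ℝ≥0∞)) k hk'.1

lemma le_one_of_sq_le_mul_midpoint {g : ℝ → ℝ} (hg : ∀ s ∈ Icc (0 : ℝ) 1, 0 ≤ g s)
    (hbdd : BddAbove (g '' Icc 0 1)) (h0 : g 0 ≤ 1) (h1 : g 1 ≤ 1)
    (hmid : ∀ u ∈ Icc (0 : ℝ) 1, ∀ v ∈ Icc (0 : ℝ) 1, g ((u + v) / 2) ^ 2 ≤ g u * g v) :
    ∀ s ∈ Icc (0 : ℝ) 1, g s ≤ 1 := by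
  set M := sSup (g '' Icc 0 1)
  have hle : ∀ s ∈ Icc (0 : ℝ) 1, g s ≤ M := fun s hs => le_csSup hbdd (mem_image_of_mem g hs)
  have hM0 : 0 ≤ M := (hg 0 (left_mem_Icc.2 zero_le_one)).trans (hle 0 (left_mem_Icc.2 zero_le_one))
  have hsq : ∀ s ∈ Icc (0 : ℝ) 1, g s ^ 2 ≤ M := by
    rintro s ⟨hs0, hs1⟩
    rcases le_or_gt s (1 / 2) with hs | hs
    · have hv : 2 * s ∈ Icc (0 : ℝ) 1 := ⟨by linarith, by linarith⟩
      calc g s ^ 2 = g ((0 + 2 * s) / 2) ^ 2 := by ring_nf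
        _ ≤ g 0 * g (2 * s) := hmid 0 (left_mem_Icc.2 zero_le_one) _ hv
        _ ≤ 1 * M := mul_le_mul h0 (hle _ hv) (hg _ hv) zero_le_one
        _ = M := one_mul M
    · have hv : 2 * s - 1 ∈ Icc (0 : ℝ) 1 := ⟨by linarith, by linarith⟩
      calc g s ^ 2 = g ((1 + (2 * s - 1)) / 2) ^ 2 := by ring_nf
        _ ≤ g 1 * g (2 * s - 1) := hmid 1 (right_mem_Icc.2 zero_le_one) _ hv
        _ ≤ 1 * M := mul_le_mul h1 (hle _ hv) (hg _ hv) zero_le_one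
        _ = M := one_mul M
  have hM : M ≤ √M := csSup_le ((nonempty_Icc.2 zero_le_one).image g) <| by
    rintro _ ⟨s, hs, rfl⟩
    exact (Real.le_sqrt (hg s hs) hM0).2 (hsq s hs)
  have hM1 : M ≤ 1 := by nlinarith [Real.sq_sqrt hM0, Real.sqrt_nonneg M]
  exact fun s hs => (hle s hs).trans hM1

lemma le_rpow_of_sq_le_mul_midpoint_of_pos {f : ℝ → ℝ} {C : ℝ} (hC : 0 < C)
    (hf : ∀ s ∈ Icc (0 : ℝ) 1, 0 ≤ f s) (hbdd : BddAbove (f '' Icc 0 1)) (h0 : f 0 ≤ 1)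
    (h1 : f 1 ≤ C)
    (hmid : ∀ u ∈ Icc (0 : ℝ) 1, ∀ v ∈ Icc (0 : ℝ) 1, f ((u + v) / 2) ^ 2 ≤ f u * f v) :
    ∀ s ∈ Icc (0 : ℝ) 1, f s ≤ C ^ s := by
  have hCs : ∀ s : ℝ, 0 < C ^ s := fun s => Real.rpow_pos_of_pos hC s
  suffices h : ∀ s ∈ Icc (0 : ℝ) 1, f s / C ^ s ≤ 1 from
    fun s hs => (div_le_one (hCs s)).1 (h s hs)
  refine le_one_of_sq_le_mul_midpoint (fun s hs => div_nonneg (hf s hs) (hCs s).le) ?_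
    (by simpa using h0) (by simpa using (div_le_one hC).2 h1) fun u hu v hv => ?_
  · obtain ⟨K, hK⟩ := hbdd
    obtain ⟨L, hL⟩ := isCompact_Icc.bddAbove_image (f := fun s => (C ^ s)⁻¹)
      ((Real.continuous_const_rpow hC.ne').continuousOn.inv₀ fun s _ => (hCs s).ne')
    refine ⟨K * L, ?_⟩
    rintro _ ⟨s, hs, rfl⟩
    exact mul_le_mul (hK (mem_image_of_mem f hs)) (hL (mem_image_of_mem _ hs))
      (inv_nonneg.2 (hCs s).le) ((hf s hs).trans (hK (mem_image_of_mem f hs)))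
  · have hCm : (C ^ ((u + v) / 2)) ^ 2 = C ^ u * C ^ v := by
      rw [sq, ← Real.rpow_add hC, ← Real.rpow_add hC]
      ring_nf
    rw [div_pow, hCm, div_mul_div_comm]
    exact div_le_div_of_nonneg_right (hmid u hu v hv) (mul_pos (hCs u) (hCs v)).le

lemma le_rpow_of_sq_le_mul_midpoint {f : ℝ → ℝ} {C : ℝ}
    (hf : ∀ s ∈ Icc (0 : ℝ) 1, 0 ≤ f s) (hbdd : BddAbove (f '' Icc 0 1)) (h0 : f 0 ≤ 1)
    (h1 : f 1 ≤ C)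
    (hmid : ∀ u ∈ Icc (0 : ℝ) 1, ∀ v ∈ Icc (0 : ℝ) 1, f ((u + v) / 2) ^ 2 ≤ f u * f v) :
    ∀ s ∈ Icc (0 : ℝ) 1, f s ≤ C ^ s := by
  rcases (hf 1 (right_mem_Icc.2 zero_le_one)).trans h1 |>.lt_or_eq with hC | rfl
  · exact le_rpow_of_sq_le_mul_midpoint_of_pos hC hf hbdd h0 h1 hmid
  rintro s ⟨hs0, hs1⟩
  rcases hs0.eq_or_lt with rfl | hs
  · simpa using h0
  have hε : ∀ ε > 0, f s ≤ ε ^ s := fun ε hε =>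
    le_rpow_of_sq_le_mul_midpoint_of_pos hε hf hbdd h0 (h1.trans hε.le) hmid s ⟨hs.le, hs1⟩
  have hlim : Tendsto (fun ε : ℝ => ε ^ s) (𝓝[>] 0) (𝓝 (0 ^ s)) :=
    (Real.continuousAt_rpow_const 0 s (Or.inr hs.le)).tendsto.mono_left nhdsWithin_le_nhds
  exact ge_of_tendsto hlim (eventually_nhdsWithin_of_forall hε)

lemma IsSelfAdjoint.nnnorm_mul_sq {𝒜 : Type*} [CStarAlgebra 𝒜] {p q : 𝒜} (hp : IsSelfAdjoint p)
    (hq : IsSelfAdjoint q) : (‖p * q‖₊ ^ 2 : ℝ≥0∞) = spectralRadius ℂ (p * p * (q * q)) := by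
  have hpq : star (p * q) * (p * q) = q * (p * p * q) := by
    rw [star_mul, hp.star_eq, hq.star_eq]; noncomm_ring
  rw [sq, ← ENNReal.coe_mul, ← CStarRing.nnnorm_star_mul_self,
    ← (IsSelfAdjoint.star_mul_self (p * q)).spectralRadius_eq_nnnorm, hpq,
    spectralRadius_mul_comm, mul_assoc]

namespace CFC

variable {𝒜 : Type*} [CStarAlgebra 𝒜] [PartialOrder 𝒜] [StarOrderedRing 𝒜] {a b : 𝒜}

lemma rpow_add_of_nonneg (ha : 0 ≤ a) {x y : ℝ} (hx : 0 ≤ x) (hy : 0 ≤ y) :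
    a ^ (x + y) = a ^ x * a ^ y := by
  rcases (add_nonneg hx hy).eq_or_lt with hxy | hxy
  · obtain ⟨rfl, rfl⟩ := (add_eq_zero_iff_of_nonneg hx hy).1 hxy.symm
    simp [rpow_zero a ha]
  simp only [rpow_def]
  rw [← cfc_mul _ _ a]
  exact cfc_congr fun z _ => NNReal.rpow_add' hxy.ne' z

lemma norm_rpow_le_max_one [Nontrivial 𝒜] (ha : 0 ≤ a) {s : ℝ} (hs : s ∈ Icc (0 : ℝ) 1) :
    ‖a ^ s‖ ≤ max 1 ‖a‖ := by
  rcases hs.1.eq_or_lt with rfl | hs0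
  · simp [rpow_zero a ha]
  rw [norm_rpow a hs0 ha]
  calc ‖a‖ ^ s ≤ max 1 ‖a‖ ^ s :=
        Real.rpow_le_rpow (norm_nonneg a) (le_max_right _ _) hs0.le
    _ ≤ max 1 ‖a‖ := Real.rpow_le_self_of_one_le (le_max_left _ _) hs.2

lemma norm_rpow_mul_rpow_midpoint_sq_le [Nontrivial 𝒜] (ha : 0 ≤ a) (hb : 0 ≤ b) {u v : ℝ}
    (hu : 0 ≤ u) (hv : 0 ≤ v) :
    ‖a ^ ((u + v) / 2) * b ^ ((u + v) / 2)‖ ^ 2 ≤ ‖a ^ u * b ^ u‖ * ‖a ^ v * b ^ v‖ := by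
  set m := (u + v) / 2
  have hm : 0 ≤ m := by positivity
  have hsq : ∀ c : 𝒜, 0 ≤ c → c ^ m * c ^ m = c ^ (u + v) := fun c hc => by
    rw [← rpow_add_of_nonneg hc hm hm, add_halves]
  have hsa : ∀ {c : 𝒜} {t : ℝ}, IsSelfAdjoint (c ^ t) := rpow_nonneg.isSelfAdjoint
  have key : (‖a ^ m * b ^ m‖₊ ^ 2 : ℝ≥0∞) ≤ ‖a ^ v * b ^ v‖₊ * ‖b ^ u * a ^ u‖₊ :=
    calc (‖a ^ m * b ^ m‖₊ ^ 2 : ℝ≥0∞) = spectralRadius ℂ (a ^ m * a ^ m * (b ^ m * b ^ m)) :=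
          hsa.nnnorm_mul_sq hsa
      _ = spectralRadius ℂ (a ^ u * (a ^ v * b ^ v * b ^ u)) := by
          rw [hsq a ha, hsq b hb, rpow_add_of_nonneg ha hu hv, add_comm u v,
            rpow_add_of_nonneg hb hv hu]
          simp only [mul_assoc]
      _ = spectralRadius ℂ (a ^ v * b ^ v * (b ^ u * a ^ u)) := by
          rw [spectralRadius_mul_comm, mul_assoc]
      _ ≤ ‖a ^ v * b ^ v * (b ^ u * a ^ u)‖₊ := spectrum.spectralRadius_le_nnnorm _
      _ ≤ ‖a ^ v * b ^ v‖₊ * ‖b ^ u * a ^ u‖₊ := by exact_mod_cast nnnorm_mul_le _ _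
  have hstar : ‖b ^ u * a ^ u‖₊ = ‖a ^ u * b ^ u‖₊ := by
    rw [← nnnorm_star, star_mul, hsa.star_eq, hsa.star_eq]
  rw [hstar, mul_comm] at key
  rw [← coe_nnnorm, ← coe_nnnorm, ← coe_nnnorm]
  exact_mod_cast key

theorem norm_rpow_mul_rpow_le (ha : 0 ≤ a) (hb : 0 ≤ b) {s : ℝ} (hs : s ∈ Icc (0 : ℝ) 1) :
    ‖a ^ s * b ^ s‖ ≤ ‖a * b‖ ^ s := by
  rcases subsingleton_or_nontrivial 𝒜 with _ | _
  · rw [Subsingleton.elim (a ^ s * b ^ s) 0, norm_zero]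
    positivity
  refine le_rpow_of_sq_le_mul_midpoint (f := fun t => ‖a ^ t * b ^ t‖) (fun _ _ => norm_nonneg _)
    ⟨max 1 ‖a‖ * max 1 ‖b‖, ?_⟩ ?_ ?_
    (fun u hu v hv => norm_rpow_mul_rpow_midpoint_sq_le ha hb hu.1 hv.1) s hs
  · rintro _ ⟨t, ht, rfl⟩
    exact (norm_mul_le _ _).trans (mul_le_mul (norm_rpow_le_max_one ha ht)
      (norm_rpow_le_max_one hb ht) (norm_nonneg _) (zero_le_one.trans (le_max_left _ _)))
  · simp [rpow_zero a ha, rpow_zero b hb]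
  · simp [rpow_one a ha, rpow_one b hb]

end CFC

/-- Cordes inequality: for positive bounded operators `A, B` on a complex
Hilbert space and `s ∈ [0,1]`, `‖A^s ∘ B^s‖ ≤ ‖A ∘ B‖^s`, where powers are taken via
the continuous functional calculus. -/
theorem stmt_5 {H : Type*} [NormedAddCommGroup H] [InnerProductSpace ℂ H]
    [CompleteSpace H]
    (A B : H →L[ℂ] H) (hA : A.IsPositive) (hB : B.IsPositive)
    (s : ℝ) (hs : s ∈ Set.Icc (0 : ℝ) 1) :
    ‖cfc (fun u : ℝ => u ^ s) A ∘L cfc (fun u : ℝ => u ^ s) B‖ ≤ ‖A ∘L B‖ ^ s := by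
  have hA' := (ContinuousLinearMap.nonneg_iff_isPositive A).2 hA
  have hB' := (ContinuousLinearMap.nonneg_iff_isPositive B).2 hB
  rw [← CFC.rpow_eq_cfc_real hA', ← CFC.rpow_eq_cfc_real hB']
  exact CFC.norm_rpow_mul_rpow_le hA' hB' hs
end

section
/- Let b > 1 and let ψ : [0,b] → [0,∞) be a continuous nondecreasing function with ψ(0) = 0 and ψ(u) > 0 for u > 0, which is operator monotone on [0,b]. Then for every a ∈ (0,b) there exists a constant c'_ψ > 0 such that for all λ, σ with 0 < λ < σ ≤ a, c'_ψ·λ/ψ(λ) ≤ σ/ψ(σ). -/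
/-- The complex Hilbert space `ℓ²(ℕ)`. -/
noncomputable abbrev ellTwo : Type := lp (fun _ : ℕ => ℂ) 2

/-- A continuous function `ψ : [0,b] → [0,∞)` is operator monotone on `[0,b]` if for
every pair `U, V` of bounded operators on `ℓ²(ℕ)` with `0 ≤ U ≤ V` (Loewner order)
and `‖V‖ ≤ b`, one has `ψ(U) ≤ ψ(V)` (via the continuous functional calculus). -/
def OperatorMonotoneOn (ψ : ℝ → ℝ) (b : ℝ) : Prop :=
  ∀ U V : ellTwo →L[ℂ] ellTwo, U.IsPositive → (V - U).IsPositive → ‖V‖ ≤ b →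
    (cfc (instCFC := IsSelfAdjoint.instContinuousFunctionalCalculus) ψ V -
      cfc (instCFC := IsSelfAdjoint.instContinuousFunctionalCalculus) ψ U).IsPositive

/-!
Test `ψ` on `U = σ P` and `V = λ + (b - λ) Q`, where `Q` projects onto `e₀` and `P` onto the unit
vector `w = √(1 - s) e₀ + √s e₁`. A weighted Cauchy–Schwarz inequality shows `U ≤ V` as soon as
`σ ((1 - s)/b + s/λ) ≤ 1`, and `‖V‖ ≤ b`. Since `ψ(0) = 0`, the functional calculus gives
`ψ(U) = ψ(σ) P` and `ψ(V) e₁ = ψ(λ) e₁`, so evaluating `ψ(U) ≤ ψ(V)` at `e₁` yields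
`s ψ(σ) ≤ ψ(λ)`. The choice `s = (1 - a/b) λ/σ` is admissible for `0 < λ < σ ≤ a`, which gives
the claim with `c'_ψ = 1 - a/b`.
-/

open InnerProductSpace ContinuousLinearMap

lemma sq_mul_add_mul_le {d l : ℝ} (hd : 0 < d) (hl : 0 < l) (τ u X Y : ℝ) :
    (τ * X + u * Y) ^ 2 ≤ (τ ^ 2 / d + u ^ 2 / l) * (d * X ^ 2 + l * Y ^ 2) := by
  rw [div_add_div _ _ hd.ne' hl.ne', div_mul_eq_mul_div, le_div_iff₀ (by positivity)]
  nlinarith [sq_nonneg (τ * l * Y - u * d * X)]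

section StarProjection

variable {A : Type*} [CStarAlgebra A] {p : A}

lemma cfc_eq_of_isStarProjection (hp : IsStarProjection p) (f : ℝ → ℝ) :
    cfc f p = algebraMap ℝ A (f 0) + (f 1 - f 0) • p := by
  have hspec : spectrum ℝ p ⊆ {0, 1} := hp.isIdempotentElem.spectrum_subset ℝ
  have hf : (spectrum ℝ p).EqOn f (fun x => f 0 + (f 1 - f 0) * x) := by
    intro x hx
    rcases hspec hx with rfl | rfl <;> simp
  rw [cfc_congr hf, cfc_const_add _ _ _ (continuous_const_mul _).continuousOn hp.isSelfAdjoint,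
    cfc_const_mul_id _ _ hp.isSelfAdjoint]

lemma cfc_algebraMap_add_smul_of_isStarProjection (hp : IsStarProjection p) (r c : ℝ)
    (f : ℝ → ℝ) :
    cfc f (algebraMap ℝ A r + c • p) = algebraMap ℝ A (f r) + (f (r + c) - f r) • p := by
  have hfin : (spectrum ℝ p).Finite :=
    (Set.toFinite {0, 1}).subset (hp.isIdempotentElem.spectrum_subset ℝ)
  have haffine : cfc (fun x => r + c * x) p = algebraMap ℝ A r + c • p := by
    rw [cfc_const_add _ _ _ (continuous_const_mul _).continuousOn hp.isSelfAdjoint,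
      cfc_const_mul_id _ _ hp.isSelfAdjoint]
  rw [← haffine, ← cfc_comp' f _ p ((hfin.image _).continuousOn _) (by fun_prop) hp.isSelfAdjoint,
    cfc_eq_of_isStarProjection hp]
  simp

lemma cfc_smul_of_isStarProjection (hp : IsStarProjection p) (c : ℝ) (f : ℝ → ℝ) :
    cfc f (c • p) = algebraMap ℝ A (f 0) + (f c - f 0) • p := by
  simpa using cfc_algebraMap_add_smul_of_isStarProjection hp 0 c f

end StarProjection

lemma inner_rankOne_self_apply {𝕜 E : Type*} [RCLike 𝕜] [SeminormedAddCommGroup E]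
    [InnerProductSpace 𝕜 E] (v x : E) :
    inner 𝕜 (rankOne 𝕜 v v x) x = ((‖inner 𝕜 v x‖ ^ 2 : ℝ) : 𝕜) := by
  rw [inner_left_rankOne_apply, ← inner_conj_symm, RCLike.conj_mul]
  norm_cast

section TestOperators

variable {H : Type*} [NormedAddCommGroup H] [InnerProductSpace ℂ H] [CompleteSpace H]

lemma smul_rankOne_le_of_orthonormal {e : Fin 2 → H} (he : Orthonormal ℂ e)
    {l d σ τ u : ℝ} (hl : 0 < l) (hd : 0 < d) (hσ : 0 ≤ σ)
    (h : σ * (τ ^ 2 / d + u ^ 2 / l) ≤ 1) :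
    σ • rankOne ℂ ((τ : ℂ) • e 0 + (u : ℂ) • e 1) ((τ : ℂ) • e 0 + (u : ℂ) • e 1) ≤
      algebraMap ℝ (H →L[ℂ] H) l + (d - l) • rankOne ℂ (e 0) (e 0) := by
  set w := (τ : ℂ) • e 0 + (u : ℂ) • e 1
  rw [le_def, isPositive_def']
  refine ⟨?_, fun x => ?_⟩
  · have hP (v : H) : IsSelfAdjoint (rankOne ℂ v v) := (isPositive_rankOne_self v).isSelfAdjoint
    exact ((IsSelfAdjoint.algebraMap _ (.all l)).add ((IsSelfAdjoint.all _).smul (hP _))).sub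
      ((IsSelfAdjoint.all σ).smul (hP w))
  set p := inner ℂ (e 0) x
  set q := inner ℂ (e 1) x
  have hform : reApplyInnerSelf (algebraMap ℝ (H →L[ℂ] H) l + (d - l) • rankOne ℂ (e 0) (e 0) -
      σ • rankOne ℂ w w) x = l * ‖x‖ ^ 2 + (d - l) * ‖p‖ ^ 2 - σ * ‖inner ℂ w x‖ ^ 2 := by
    rw [reApplyInnerSelf_apply, sub_apply, add_apply, smul_apply, smul_apply,
      Algebra.algebraMap_eq_smul_one, smul_apply, one_apply_eq_self, inner_sub_left,
      inner_add_left, inner_smul_left_eq_smul, inner_smul_left_eq_smul, inner_smul_left_eq_smul,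
      inner_rankOne_self_apply, inner_rankOne_self_apply, inner_self_eq_norm_sq_to_K]
    simp [p, ← Complex.ofReal_pow]
  have hwx : ‖inner ℂ w x‖ ≤ |τ| * ‖p‖ + |u| * ‖q‖ := by
    calc ‖inner ℂ w x‖ = ‖(τ : ℂ) * p + (u : ℂ) * q‖ := by simp [w, p, q]
      _ ≤ |τ| * ‖p‖ + |u| * ‖q‖ := (norm_add_le _ _).trans_eq (by simp)
  have hbessel : ‖p‖ ^ 2 + ‖q‖ ^ 2 ≤ ‖x‖ ^ 2 := by
    simpa [Fin.sum_univ_two] using he.sum_inner_products_le (s := Finset.univ) x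
  have hcs := sq_mul_add_mul_le hd hl |τ| |u| ‖p‖ ‖q‖
  rw [sq_abs, sq_abs] at hcs
  have hσw : σ * ‖inner ℂ w x‖ ^ 2 ≤
      σ * ((τ ^ 2 / d + u ^ 2 / l) * (d * ‖p‖ ^ 2 + l * ‖q‖ ^ 2)) :=
    mul_le_mul_of_nonneg_left ((pow_le_pow_left₀ (norm_nonneg _) hwx 2).trans hcs) hσ
  rw [hform]
  nlinarith [mul_le_mul_of_nonneg_right h (by positivity : 0 ≤ d * ‖p‖ ^ 2 + l * ‖q‖ ^ 2)]

lemma norm_algebraMap_add_smul_rankOne_le {l d : ℝ} (hl : 0 ≤ l) (hld : l ≤ d) {x : H}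
    (hx : ‖x‖ = 1) : ‖algebraMap ℝ (H →L[ℂ] H) l + (d - l) • rankOne ℂ x x‖ ≤ d :=
  calc _ ≤ ‖algebraMap ℝ (H →L[ℂ] H) l‖ + ‖(d - l) • rankOne ℂ x x‖ := norm_add_le _ _
    _ ≤ l * 1 + (d - l) * 1 := by
      rw [norm_algebraMap, norm_smul, norm_rankOne, hx, mul_one, Real.norm_of_nonneg hl,
        Real.norm_of_nonneg (sub_nonneg.2 hld)]
      gcongr
      exact norm_id_le
    _ = d := by ring

theorem Orthonormal.exists_isPositive_inner_cfc_sub_cfc_eq {e : Fin 2 → H}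
    (he : Orthonormal ℂ e) {l d σ s : ℝ} (hl : 0 < l) (hld : l ≤ d) (hσ : 0 ≤ σ) (hs0 : 0 ≤ s)
    (hs1 : s ≤ 1) (h : σ * ((1 - s) / d + s / l) ≤ 1) :
    ∃ U V : H →L[ℂ] H, U.IsPositive ∧ (V - U).IsPositive ∧ ‖V‖ ≤ d ∧
      ∀ f : ℝ → ℝ, f 0 = 0 →
        inner ℂ ((cfc f V - cfc f U) (e 1)) (e 1) = ((f l - f σ * s : ℝ) : ℂ) := by
  have he01 : inner ℂ (e 0) (e 1) = 0 := he.2 (by decide)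
  have hτ : √(1 - s) ^ 2 = 1 - s := Real.sq_sqrt (by linarith)
  have hu : √s ^ 2 = s := Real.sq_sqrt hs0
  set w : H := (√(1 - s) : ℂ) • e 0 + (√s : ℂ) • e 1
  have hw : ‖w‖ = 1 := by
    have h01 : inner ℂ ((√(1 - s) : ℂ) • e 0) ((√s : ℂ) • e 1) = 0 := by
      simp [he01]
    have hww := norm_add_sq_eq_norm_sq_add_norm_sq_of_inner_eq_zero _ _ h01
    simp only [norm_smul, he.1 0, he.1 1, Complex.norm_real, Real.norm_eq_abs, mul_one,
      abs_mul_abs_self, Real.mul_self_sqrt hs0, Real.mul_self_sqrt (sub_nonneg.2 hs1),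
      sub_add_cancel] at hww
    exact (mul_self_eq_one_iff.mp hww).resolve_right (by linarith [norm_nonneg w])
  have hwe1 : inner ℂ w (e 1) = √s := by simp [w, he01, he.1 1]
  have hP : IsStarProjection (rankOne ℂ w w) := isStarProjection_rankOne_self hw
  have hQ : IsStarProjection (rankOne ℂ (e 0) (e 0)) := isStarProjection_rankOne_self (he.1 0)
  refine ⟨σ • rankOne ℂ w w, algebraMap ℝ _ l + (d - l) • rankOne ℂ (e 0) (e 0), ?_,
    smul_rankOne_le_of_orthonormal he hl (hl.trans_le hld) hσ (by rwa [hτ, hu]),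
    norm_algebraMap_add_smul_rankOne_le hl.le hld (he.1 0), fun f hf0 => ?_⟩
  · rw [← nonneg_iff_isPositive]
    exact smul_nonneg hσ ((nonneg_iff_isPositive _).2 (isPositive_rankOne_self w))
  rw [cfc_smul_of_isStarProjection hP, cfc_algebraMap_add_smul_of_isStarProjection hQ]
  simp only [sub_apply, add_apply, smul_apply, Algebra.algebraMap_eq_smul_one, one_apply_eq_self,
    inner_sub_left, inner_add_left, inner_smul_left_eq_smul, inner_rankOne_self_apply, he01, hwe1]
  simp [hf0, inner_self_eq_norm_sq_to_K, he.1 1, hu]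

end TestOperators

theorem OperatorMonotoneOn.apply_mul_le {ψ : ℝ → ℝ} {b : ℝ} (hψ : OperatorMonotoneOn ψ b)
    (hψ0 : ψ 0 = 0) {l σ s : ℝ} (hl : 0 < l) (hlb : l ≤ b) (hσ : 0 ≤ σ) (hs0 : 0 ≤ s)
    (hs1 : s ≤ 1) (h : σ * ((1 - s) / b + s / l) ≤ 1) : ψ σ * s ≤ ψ l := by
  obtain ⟨e, he⟩ : ∃ e : Fin 2 → ellTwo, Orthonormal ℂ e :=
    ⟨_, (HilbertBasis.ofRepr (LinearIsometryEquiv.refl ℂ ellTwo)).orthonormal.comp _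
      Fin.val_injective⟩
  obtain ⟨U, V, hU, hVU, hV, hinner⟩ :=
    he.exists_isPositive_inner_cfc_sub_cfc_eq hl hlb hσ hs0 hs1 h
  have := (hψ U V hU hVU hV).inner_nonneg_left (e 1)
  rwa [hinner ψ hψ0, Complex.zero_le_real, sub_nonneg] at this

theorem OperatorMonotoneOn.one_sub_div_mul_le {ψ : ℝ → ℝ} {a b l σ : ℝ}
    (hψ : OperatorMonotoneOn ψ b) (hψ0 : ψ 0 = 0) (hab : a ≤ b) (hl : 0 < l) (hlσ : l ≤ σ)
    (hσa : σ ≤ a) : (1 - a / b) * l * ψ σ ≤ σ * ψ l := by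
  have hb : 0 < b := by linarith
  have hσ : 0 < σ := hl.trans_le hlσ
  set c := 1 - a / b
  have hc0 : 0 ≤ c := sub_nonneg.2 ((div_le_one hb).2 hab)
  have hc1 : c ≤ 1 := sub_le_self _ (div_nonneg (by linarith) hb.le)
  have hs1 : c * l / σ ≤ 1 := (div_le_one hσ).2 ((mul_le_of_le_one_left hl.le hc1).trans hlσ)
  have h : σ * ((1 - c * l / σ) / b + c * l / σ / l) ≤ 1 :=
    calc σ * ((1 - c * l / σ) / b + c * l / σ / l) = (σ - c * l) / b + c := by
          field_simp
      _ ≤ a / b + c := by gcongr; nlinarith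
      _ = 1 := by ring
  have key := hψ.apply_mul_le hψ0 hl (by linarith) hσ.le
    (div_nonneg (mul_nonneg hc0 hl.le) hσ.le) hs1 h
  calc c * l * ψ σ = σ * (ψ σ * (c * l / σ)) := by field_simp
    _ ≤ σ * ψ l := by gcongr

theorem stmt_7_general (b : ℝ) (ψ : ℝ → ℝ)
    (hψ0 : ψ 0 = 0)
    (hψpos : ∀ u, 0 < u → u ≤ b → 0 < ψ u)
    (hopmono : OperatorMonotoneOn ψ b)
    (a : ℝ) (ha : a ∈ Set.Ioo (0 : ℝ) b) :
    ∃ c' : ℝ, 0 < c' ∧ ∀ lam σ : ℝ, 0 < lam → lam < σ → σ ≤ a →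
      c' * lam / ψ lam ≤ σ / ψ σ := by
  obtain ⟨ha0, hab⟩ := ha
  refine ⟨1 - a / b, sub_pos.2 ((div_lt_one (ha0.trans hab)).2 hab),
    fun lam σ hlam hlamσ hσa => ?_⟩
  have hσb : σ ≤ b := hσa.trans hab.le
  rw [div_le_div_iff₀ (hψpos lam hlam (hlamσ.le.trans hσb)) (hψpos σ (hlam.trans hlamσ) hσb)]
  exact hopmono.one_sub_div_mul_le hψ0 hab.le hlam hlamσ.le hσa

/-- for an operator monotone function `ψ` on `[0,b]` with `ψ(0) = 0`,
`ψ > 0` on `(0,b]`, and every `a ∈ (0,b)`, there is a constant `c'_ψ > 0` with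
`c'_ψ·λ/ψ(λ) ≤ σ/ψ(σ)` whenever `0 < λ < σ ≤ a`. -/
theorem stmt_7 (b : ℝ) (hb : 1 < b) (ψ : ℝ → ℝ)
    (hcont : ContinuousOn ψ (Set.Icc 0 b))
    (hmono : MonotoneOn ψ (Set.Icc 0 b))
    (hnonneg : ∀ u ∈ Set.Icc (0 : ℝ) b, 0 ≤ ψ u)
    (hψ0 : ψ 0 = 0)
    (hψpos : ∀ u, 0 < u → u ≤ b → 0 < ψ u)
    (hopmono : OperatorMonotoneOn ψ b)
    (a : ℝ) (ha : a ∈ Set.Ioo (0 : ℝ) b) :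
    ∃ c' : ℝ, 0 < c' ∧ ∀ lam σ : ℝ, 0 < lam → lam < σ → σ ≤ a →
      c' * lam / ψ lam ≤ σ / ψ σ :=
  stmt_7_general b ψ hψ0 hψpos hopmono a ha
end
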